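/- For the Z-graded Melikian algebra M over a field of characteristic 5, H^r(M₀, M_{−3}) = 0 for all r ≥ 0, where M₀ ≅ gl₂ acts on M_{−3} = ⟨D₁,D₂⟩ by the adjoint action in M. -/

import Mathlib

open scoped BigOperators

namespace Melikian

/-- Index set for monomials in the truncated polynomial algebra
`A(2) = F[x₁,x₂]/(x₁⁵,x₂⁵)`. -/
abbrev Idx : Type := Fin 5 × Fin 5

/-- The truncated polynomial algebra `A(2)`, as functions on monomial exponents. -/
abbrev A (F : Type*) [Field F] : Type _ := Idx → F

variable {F : Type*} [Field F]

/-- The monomial `x^b = x₁^{b₁} x₂^{b₂}`. -/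
def X (b : Idx) : A F := fun a => if a = b then 1 else 0

/-- Truncated multiplication of `A(2)`. -/
def mulA (f g : A F) : A F := fun a =>
  ∑ b : Idx, ∑ c : Idx,
    if b.1.val + c.1.val = a.1.val ∧ b.2.val + c.2.val = a.2.val then f b * g c else 0

/-- Partial derivative `∂/∂x₁` on `A(2)`. -/
def d1 (f : A F) : A F := fun a =>
  if h : a.1.val + 1 < 5 then ((a.1.val + 1 : ℕ) : F) * f (⟨a.1.val + 1, h⟩, a.2) else 0

/-- Partial derivative `∂/∂x₂` on `A(2)`. -/
def d2 (f : A F) : A F := fun a =>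
  if h : a.2.val + 1 < 5 then ((a.2.val + 1 : ℕ) : F) * f (a.1, ⟨a.2.val + 1, h⟩) else 0

/-- The Witt–Jacobson algebra `W(2)` as a free `A(2)`-module with basis `D₁, D₂`:
an element `(f₁, f₂)` stands for `f₁D₁ + f₂D₂`. -/
abbrev W (F : Type*) [Field F] : Type _ := A F × A F

/-- Action of a derivation `D = f₁D₁+f₂D₂ ∈ W(2)` on `A(2)`. -/
def Dw (D : W F) (g : A F) : A F := mulA D.1 (d1 g) + mulA D.2 (d2 g)

/-- Divergence `div(f₁D₁+f₂D₂) = D₁(f₁) + D₂(f₂)`. -/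
def divW (D : W F) : A F := d1 D.1 + d2 D.2

/-- The usual bracket of `W(2)`. -/
def brW (D E : W F) : W F := (Dw D E.1 - Dw E D.1, Dw D E.2 - Dw E D.2)

/-- Multiplication of an element of `W(2)` by a truncated polynomial. -/
def smulA (f : A F) (D : W F) : W F := (mulA f D.1, mulA f D.2)

/-- The Melikian algebra `M = A(2) ⊕ W(2) ⊕ W(2)~` as an `F`-vector space. -/
abbrev Mel (F : Type*) [Field F] : Type _ := A F × W F × W F

/-- Inclusion of `A(2)` into `M`. -/
def ιA (f : A F) : Mel F := (f, 0, 0)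

/-- Inclusion of `W(2)` into `M`. -/
def ιW (D : W F) : Mel F := (0, D, 0)

/-- Inclusion of the second copy `W(2)~` into `M`, `D ↦ D̃`. -/
def ιT (D : W F) : Mel F := (0, 0, D)

/-- The Melikian bracket on `M = A(2) ⊕ W(2) ⊕ W(2)~`, defined by the rules
`[D,Ẽ] = [D,E]~ + 2 div(D) Ẽ`, `[D,f] = D(f) − 2 div(D) f`,
`[f₁D̃₁+f₂D̃₂, g₁D̃₁+g₂D̃₂] = f₁g₂ − f₂g₁`, `[f,Ẽ] = fE`,
`[f,g] = 2(gD₂(f) − fD₂(g))D̃₁ + 2(fD₁(g) − gD₁(f))D̃₂`,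
extended bilinearly and antisymmetrically (with the standard bracket on `W(2)`). -/
def brM (u v : Mel F) : Mel F :=
  ( (Dw u.2.1 v.1 - (2 : F) • mulA (divW u.2.1) v.1)
      - (Dw v.2.1 u.1 - (2 : F) • mulA (divW v.2.1) u.1)
      + (mulA u.2.2.1 v.2.2.2 - mulA u.2.2.2 v.2.2.1)
  , brW u.2.1 v.2.1 + smulA u.1 v.2.2 - smulA v.1 u.2.2
  , (brW u.2.1 v.2.2 + (2 : F) • smulA (divW u.2.1) v.2.2)
      - (brW v.2.1 u.2.2 + (2 : F) • smulA (divW v.2.1) u.2.2)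
      + ((2 : F) • (mulA v.1 (d2 u.1) - mulA u.1 (d2 v.1)),
         (2 : F) • (mulA u.1 (d1 v.1) - mulA v.1 (d1 u.1))) )

/-- `x^b D_i` as an element of `W(2)` (`i = 0` stands for `D₁`, `i = 1` for `D₂`). -/
def wOf (i : Fin 2) (b : Idx) : W F := if i = 0 then (X b, 0) else (0, X b)

/-- The element `x₁D₁ ∈ M`. -/
def x1D1 : Mel F := ιW (X (1, 0), 0)

/-- The element `x₂D₂ ∈ M`. -/
def x2D2 : Mel F := ιW (0, X (0, 1))

/-- The element `1 ∈ A(2) ⊂ M`. -/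
def oneM : Mel F := ιA (X (0, 0))

/-- The element `D_{i+1} ∈ W(2) ⊂ M`. -/
def DD (i : Fin 2) : Mel F := ιW (wOf i (0, 0))

/-- The element `D̃_{i+1} ∈ W(2)~ ⊂ M`. -/
def TT (i : Fin 2) : Mel F := ιT (wOf i (0, 0))

/-- Total degree of a monomial exponent. -/
def degA (b : Idx) : ℤ := (b.1.val : ℤ) + (b.2.val : ℤ)

/-- The degree-`d` piece `M_d` of the `ℤ`-grading of the Melikian algebra:
`deg_M(f) = 3 deg(f) − 2` on `A(2)`, `deg_M(x^bD_i) = 3(|b|−1)` on `W(2)`, and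
`deg_M(x^bD̃_i) = 3(|b|−1)+2` on `W(2)~`. -/
def Md (d : ℤ) : Submodule F (Mel F) :=
  Submodule.span F
    ( {m | ∃ b : Idx, m = ιA (X b) ∧ d = 3 * degA b - 2}
      ∪ {m | ∃ b : Idx, ∃ i : Fin 2, m = ιW (wOf i b) ∧ d = 3 * (degA b - 1)}
      ∪ {m | ∃ b : Idx, ∃ i : Fin 2, m = ιT (wOf i b) ∧ d = 3 * (degA b - 1) + 2} )

/-- The part `M_{≥ d}` of the Melikian algebra. -/
def Mge (d : ℤ) : Submodule F (Mel F) := ⨆ e : ℤ, ⨆ _ : d ≤ e, (Md e : Submodule F (Mel F))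

/-- The squaring `Sq(γ)(x,y) = Σ_{k=1}^{4} [γ^k(x), γ^{5−k}(y)] / (k!(5−k)!)`
of an operator `γ` on the Melikian algebra (characteristic 5). -/
def melSq (γ : Mel F → Mel F) (x y : Mel F) : Mel F :=
  ∑ k ∈ Finset.Icc 1 4,
    ((Nat.factorial k * Nat.factorial (5 - k) : ℕ) : F)⁻¹ • brM (γ^[k] x) (γ^[5 - k] y)

/-- The Chevalley–Eilenberg coboundary of a linear 1-cochain of `M` with values in the
adjoint representation. -/
def cob (g : Mel F →ₗ[F] Mel F) (x y : Mel F) : Mel F :=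
  brM x (g y) - brM y (g x) - g (brM x y)


/-- `M₀ ≅ gl₂`, modelled by `2×2` matrices with the commutator bracket
(`x_iD_j ↔ E_{ij}`). -/
abbrev gl2 (F : Type*) [Field F] : Type _ := Matrix (Fin 2) (Fin 2) F

/-- The action of `M₀ ≅ gl₂` on `M_{−3} = ⟨D₁, D₂⟩` coming from the Melikian bracket:
`[x_iD_j, D_k] = −δ_{ik} D_j`. -/
def rho {F : Type*} [Field F] (Am : gl2 F) (v : Fin 2 → F) : Fin 2 → F :=
  fun j => -∑ i, Am i j * v i

/-- The embedding of `gl₂` into `M` as `M₀`, `E_{ij} ↦ x_iD_j`. -/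
def embG {F : Type*} [Field F] (Am : gl2 F) : Mel F :=
  ιW (Am 0 0 • X (1, 0) + Am 1 0 • X (0, 1), Am 0 1 • X (1, 0) + Am 1 1 • X (0, 1))

/-- The embedding of the `gl₂`-module `F²` into `M` as `M_{−3}`, `e_k ↦ D_k`. -/
def embN {F : Type*} [Field F] (v : Fin 2 → F) : Mel F := v 0 • DD 0 + v 1 • DD 1

/-- The Chevalley–Eilenberg differential on cochains of `M₀` with values in `M_{−3}`. -/
def cdiff {F : Type*} [Field F] {r : ℕ} (f : (Fin r → gl2 F) → (Fin 2 → F)) :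
    (Fin (r + 1) → gl2 F) → (Fin 2 → F) := fun σ =>
  (∑ i : Fin (r + 1), ((-1 : ℤ) ^ (i : ℕ)) • rho (σ i) (f (i.removeNth σ))) +
    ∑ i : Fin (r + 1), ∑ j : Fin (r + 1),
      if h : (i : ℕ) < (j : ℕ) then
        ((-1 : ℤ) ^ ((i : ℕ) + (j : ℕ))) •
          f (Function.update (j.removeNth σ)
              ⟨(i : ℕ), lt_of_lt_of_le h (Nat.lt_succ_iff.mp j.isLt)⟩ ⁅σ i, σ j⁆)
      else 0

/-- An `r`-cochain is multilinear and alternating. -/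
def isMultAlt {F : Type*} [Field F] {r : ℕ} (f : (Fin r → gl2 F) → (Fin 2 → F)) : Prop :=
  (∀ (σ : Fin r → gl2 F) (i : Fin r) (x y : gl2 F) (c : F),
    f (Function.update σ i (x + c • y)) =
      f (Function.update σ i x) + c • f (Function.update σ i y)) ∧
  (∀ (σ : Fin r → gl2 F) (i j : Fin r), i ≠ j → σ i = σ j → f σ = 0)

/-! ### Auxiliary lemmas -/

section Aux

lemma mulA_zero_right (f : A F) : mulA f 0 = 0 := by
  funext a; simp [mulA]

lemma mulA_zero_left (f : A F) : mulA 0 f = 0 := by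
  funext a; simp [mulA]

lemma mulA_add_right (f g h : A F) : mulA f (g + h) = mulA f g + mulA f h := by
  funext a
  simp only [mulA, Pi.add_apply]
  rw [← Finset.sum_add_distrib]
  refine Finset.sum_congr rfl fun b _ => ?_
  rw [← Finset.sum_add_distrib]
  refine Finset.sum_congr rfl fun c _ => ?_
  split <;> ring

lemma mulA_add_left (f g h : A F) : mulA (f + g) h = mulA f h + mulA g h := by
  funext a
  simp only [mulA, Pi.add_apply]
  rw [← Finset.sum_add_distrib]
  refine Finset.sum_congr rfl fun b _ => ?_
  rw [← Finset.sum_add_distrib]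
  refine Finset.sum_congr rfl fun c _ => ?_
  split <;> ring

lemma mulA_smul_right (c : F) (f g : A F) : mulA f (c • g) = c • mulA f g := by
  funext a
  simp only [mulA, Pi.smul_apply, smul_eq_mul, Finset.mul_sum]
  refine Finset.sum_congr rfl fun b _ => ?_
  refine Finset.sum_congr rfl fun d _ => ?_
  split <;> ring

lemma mulA_smul_left (c : F) (f g : A F) : mulA (c • f) g = c • mulA f g := by
  funext a
  simp only [mulA, Pi.smul_apply, smul_eq_mul, Finset.mul_sum]
  refine Finset.sum_congr rfl fun b _ => ?_
  refine Finset.sum_congr rfl fun d _ => ?_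
  split <;> ring

lemma mulA_X00_right (f : A F) : mulA f (X (0, 0)) = f := by
  funext a
  simp only [mulA]
  have h1 : ∀ b : Idx,
      (∑ c : Idx, if b.1.val + c.1.val = a.1.val ∧ b.2.val + c.2.val = a.2.val
        then f b * X (0, 0) c else 0) = if b = a then f b else 0 := by
    intro b
    rw [Fintype.sum_eq_single ((0, 0) : Idx)]
    · simp [X, Prod.ext_iff, Fin.val_eq_val]
    · intro c hc; simp [X, hc]
  rw [Finset.sum_congr rfl fun b _ => h1 b, Finset.sum_ite_eq']
  simp

lemma mulA_X00_left (f : A F) : mulA (X (0, 0)) f = f := by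
  funext a
  simp only [mulA]
  rw [Fintype.sum_eq_single ((0, 0) : Idx)]
  · have h1 : ∀ c : Idx,
        (if (0:Fin 5).val + c.1.val = a.1.val ∧ (0:Fin 5).val + c.2.val = a.2.val
          then X (0, 0) (0, 0) * f c else 0) = if c = a then f c else 0 := by
      intro c
      simp [X, Prod.ext_iff, Fin.val_eq_val]
    rw [Finset.sum_congr rfl fun c _ => h1 c, Finset.sum_ite_eq']
    simp
  · intro b hb
    apply Finset.sum_eq_zero; intro c _
    simp [X, hb]

lemma d1_zero : d1 (0 : A F) = 0 := by funext a; simp [d1]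

lemma d2_zero : d2 (0 : A F) = 0 := by funext a; simp [d2]

lemma d1_add (f g : A F) : d1 (f + g) = d1 f + d1 g := by
  funext a; simp only [d1, Pi.add_apply]; split <;> ring

lemma d2_add (f g : A F) : d2 (f + g) = d2 f + d2 g := by
  funext a; simp only [d2, Pi.add_apply]; split <;> ring

lemma d1_smul (c : F) (f : A F) : d1 (c • f) = c • d1 f := by
  funext a; simp only [d1, Pi.smul_apply, smul_eq_mul]; split <;> ring

lemma d2_smul (c : F) (f : A F) : d2 (c • f) = c • d2 f := by
  funext a; simp only [d2, Pi.smul_apply, smul_eq_mul]; split <;> ring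

lemma d1_X10 : d1 (X (1, 0) : A F) = X (0, 0) := by
  funext a
  obtain ⟨a1, a2⟩ := a
  fin_cases a1 <;> fin_cases a2 <;>
    simp +decide [d1, X, Prod.ext_iff, Fin.ext_iff]

lemma d1_X01 : d1 (X (0, 1) : A F) = 0 := by
  funext a
  obtain ⟨a1, a2⟩ := a
  fin_cases a1 <;> fin_cases a2 <;>
    simp +decide [d1, X, Prod.ext_iff, Fin.ext_iff]

lemma d2_X10 : d2 (X (1, 0) : A F) = 0 := by
  funext a
  obtain ⟨a1, a2⟩ := a
  fin_cases a1 <;> fin_cases a2 <;>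
    simp +decide [d2, X, Prod.ext_iff, Fin.ext_iff]

lemma d2_X01 : d2 (X (0, 1) : A F) = X (0, 0) := by
  funext a
  obtain ⟨a1, a2⟩ := a
  fin_cases a1 <;> fin_cases a2 <;>
    simp +decide [d2, X, Prod.ext_iff, Fin.ext_iff]

lemma d1_X00 : d1 (X (0, 0) : A F) = 0 := by
  funext a
  obtain ⟨a1, a2⟩ := a
  fin_cases a1 <;> fin_cases a2 <;>
    simp +decide [d1, X, Prod.ext_iff, Fin.ext_iff]

lemma d2_X00 : d2 (X (0, 0) : A F) = 0 := by
  funext a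
  obtain ⟨a1, a2⟩ := a
  fin_cases a1 <;> fin_cases a2 <;>
    simp +decide [d2, X, Prod.ext_iff, Fin.ext_iff]

lemma Dw_zero_right (D : W F) : Dw D (0 : A F) = 0 := by
  simp [Dw, d1_zero, d2_zero, mulA_zero_right]

lemma Dw_zero_left (g : A F) : Dw (0 : W F) g = 0 := by
  simp [Dw, mulA_zero_left]

lemma brW_zero_right (D : W F) : brW D (0 : W F) = 0 := by
  simp [brW, Dw_zero_right, Dw_zero_left, Prod.ext_iff]

lemma brW_zero_left (D : W F) : brW (0 : W F) D = 0 := by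
  simp [brW, Dw_zero_right, Dw_zero_left, Prod.ext_iff]

lemma smulA_zero_left (D : W F) : smulA (0 : A F) D = 0 := by
  unfold smulA; rw [mulA_zero_left, mulA_zero_left]; rfl

lemma smulA_zero_right (f : A F) : smulA f (0 : W F) = 0 := by
  have h0 : (0 : W F) = ((0 : A F), (0 : A F)) := rfl
  rw [h0]; unfold smulA; rw [mulA_zero_right]

lemma Dw_G (a b c d p q : F) :
    Dw ((a • X (1, 0) + b • X (0, 1), c • X (1, 0) + d • X (0, 1)) : W F)
        (p • X (1, 0) + q • X (0, 1)) =
      p • (a • X (1, 0) + b • X (0, 1)) + q • (c • X (1, 0) + d • X (0, 1)) := by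
  simp only [Dw, d1_add, d2_add, d1_smul, d2_smul, d1_X10, d1_X01, d2_X10, d2_X01,
    smul_zero, add_zero, zero_add, mulA_smul_right, mulA_X00_right]

lemma Dw_G_const (a b c d u : F) :
    Dw ((a • X (1, 0) + b • X (0, 1), c • X (1, 0) + d • X (0, 1)) : W F)
        (u • X (0, 0)) = 0 := by
  simp only [Dw, d1_smul, d2_smul, d1_X00, d2_X00, smul_zero, mulA_zero_right, add_zero]

lemma Dw_N (u v p q : F) :
    Dw ((u • X (0, 0), v • X (0, 0)) : W F) (p • X (1, 0) + q • X (0, 1)) =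
      (u * p + v * q) • X (0, 0) := by
  simp only [Dw, d1_add, d2_add, d1_smul, d2_smul, d1_X10, d1_X01, d2_X10, d2_X01,
    smul_zero, add_zero, zero_add, mulA_smul_right, mulA_smul_left, mulA_X00_right]
  module

lemma rho_one (v : Fin 2 → F) : rho (1 : gl2 F) v = -v := by
  funext j
  simp [rho, Matrix.one_apply, ite_mul]

lemma rho_smul (c : F) (Am : gl2 F) (v : Fin 2 → F) :
    rho Am (c • v) = c • rho Am v := by
  funext j
  simp only [rho, Pi.smul_apply, smul_eq_mul, mul_neg, Finset.mul_sum]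
  congr 1
  exact Finset.sum_congr rfl fun i _ => by ring

lemma zconv (k : ℕ) (w : Fin 2 → F) : ((-1 : ℤ) ^ k) • w = ((-1 : F) ^ k) • w := by
  rw [← Int.cast_smul_eq_zsmul F ((-1 : ℤ) ^ k) w]
  push_cast
  ring_nf

lemma removeNth_snoc {α : Type*} {n : ℕ} (i : Fin (n + 1)) (σ : Fin (n + 1) → α)
    (z : α) :
    Fin.removeNth (α := fun _ => α) i.castSucc (Fin.snoc σ z)
      = Fin.snoc (Fin.removeNth (α := fun _ => α) i σ) z := by
  funext m
  simp only [Fin.removeNth]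
  refine Fin.lastCases ?_ ?_ m
  · rw [Fin.succAbove_of_le_castSucc _ _ (by
      rw [Fin.castSucc_le_castSucc_iff]; exact Fin.le_last i)]
    rw [Fin.succ_last, Fin.snoc_last, Fin.snoc_last]
  · intro k
    rw [Fin.castSucc_succAbove_castSucc, Fin.snoc_castSucc, Fin.snoc_castSucc]
    rfl

lemma update_snoc_mk {α : Type*} {n : ℕ} (A' : Fin n → α) (z x : α) (v : ℕ)
    (hv : v < n) (hv' : v < n + 1) :
    Function.update (Fin.snoc A' z : Fin (n + 1) → α) ⟨v, hv'⟩ x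
      = (Fin.snoc (Function.update A' ⟨v, hv⟩ x) z : Fin (n + 1) → α) := by
  have h : (⟨v, hv'⟩ : Fin (n + 1)) = Fin.castSucc ⟨v, hv⟩ := rfl
  rw [h, ← Fin.snoc_update]

lemma cdiff_smul {r : ℕ} (c : F) (g : (Fin r → gl2 F) → Fin 2 → F)
    (σ : Fin (r + 1) → gl2 F) :
    cdiff (fun τ => c • g τ) σ = c • cdiff g σ := by
  simp only [cdiff, smul_add, Finset.smul_sum, zconv]
  congr 1
  · refine Finset.sum_congr rfl fun i _ => ?_
    rw [rho_smul, smul_smul, smul_smul, mul_comm]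
  · refine Finset.sum_congr rfl fun i _ => ?_
    refine Finset.sum_congr rfl fun j _ => ?_
    split
    · rw [smul_smul, smul_smul, mul_comm]
    · rw [smul_zero]

end Aux

set_option maxHeartbeats 2000000 in
/-- For the `ℤ`-graded Melikian algebra over a field of characteristic 5,
`H^r(M₀, M_{−3}) = 0` for all `r ≥ 0`, where `M₀ ≅ gl₂` acts on `M_{−3} = ⟨D₁, D₂⟩` by
the adjoint action of the Melikian bracket (the matrix model is compatible with the
Melikian bracket via the embeddings). -/
theorem melikian_H_M0 (F : Type*) [Field F] [CharP F 5] :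
    (∀ Am Bm : gl2 F, brM (embG Am) (embG Bm) = embG ⁅Am, Bm⁆) ∧
    (∀ (Am : gl2 F) (v : Fin 2 → F), brM (embG Am) (embN v) = embN (rho Am v)) ∧
    (∀ f : (Fin 0 → gl2 F) → (Fin 2 → F), cdiff f = 0 → f = 0) ∧
    (∀ (r : ℕ) (f : (Fin (r + 1) → gl2 F) → (Fin 2 → F)), isMultAlt f → cdiff f = 0 →
      ∃ h : (Fin r → gl2 F) → (Fin 2 → F), isMultAlt h ∧ f = cdiff h) := by
  classical
  refine ⟨?_, ?_, ?_, ?_⟩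
  · -- Part 1: the embedding `gl₂ → M₀` is a Lie algebra morphism
    intro Am Bm
    simp only [embG, ιW, brM]
    simp only [Prod.mk.injEq]
    refine ⟨?_, ?_, ?_⟩
    · simp [Dw_zero_right, mulA_zero_right, mulA_zero_left]
    · simp only [smulA_zero_left, add_zero, sub_zero, brW]
      simp only [Prod.mk.injEq]
      constructor <;>
        · rw [Dw_G, Dw_G]
          simp only [Ring.lie_def, Matrix.sub_apply, Matrix.mul_apply, Fin.sum_univ_two]
          module
    · simp [brW_zero_right, smulA_zero_right, mulA_zero_left, Prod.ext_iff]
  · -- Part 2: compatibility of the action with the Melikian bracket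
    intro Am v
    have hw0 : (wOf 0 ((0 : Fin 5), (0 : Fin 5)) : W F) = (X (0, 0), 0) := by
      simp [wOf]
    have hw1 : (wOf 1 ((0 : Fin 5), (0 : Fin 5)) : W F) = (0, X (0, 0)) := by
      simp [wOf]
    have hembN : ∀ w : Fin 2 → F,
        embN w = ((0 : A F), ((w 0 • X (0, 0), w 1 • X (0, 0)) : W F), (0 : W F)) := by
      intro w
      simp only [embN, DD, ιW, hw0, hw1]
      simp [Prod.ext_iff]
    rw [hembN v, hembN (rho Am v)]
    simp only [embG, ιW, brM]
    simp only [Prod.mk.injEq]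
    refine ⟨?_, ?_, ?_⟩
    · simp [Dw, d1_zero, d2_zero, d1_smul, d2_smul, d1_X00, d2_X00,
        mulA_zero_right, mulA_zero_left, smul_zero]
    · simp only [smulA_zero_left, add_zero, sub_zero, brW]
      simp only [Prod.mk.injEq]
      constructor <;>
        · rw [Dw_G_const, Dw_N]
          simp only [rho, Fin.sum_univ_two]
          module
    · simp [brW_zero_right, smulA_zero_right, mulA_zero_left, mulA_zero_right,
        mulA_smul_right, d1_smul, d2_smul, d1_X00, d2_X00, Prod.ext_iff]
  · -- Part 3: H^0 = 0
    intro f hf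
    funext x
    simp only [Pi.zero_apply]
    have h := congrFun hf (fun _ => (1 : gl2 F))
    rw [Pi.zero_apply] at h
    simp only [cdiff, Fin.sum_univ_succ, Fin.sum_univ_zero, Fin.val_zero,
      Nat.lt_irrefl, dite_false, pow_zero, one_smul, add_zero, rho_one,
      neg_eq_zero] at h
    have hx : x = Fin.removeNth 0 (fun _ => (1 : gl2 F)) := Subsingleton.elim _ _
    rw [hx]
    exact h
  · -- Part 4: H^{r+1} = 0, via contraction with the central element 1 ∈ gl₂
    intro r f hMA hcoc
    have hzero : ∀ (σ : Fin (r + 1) → gl2 F) (i : Fin (r + 1)),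
        f (Function.update σ i 0) = 0 := by
      intro σ i
      have h := hMA.1 σ i 0 0 1
      simp only [smul_zero, add_zero, one_smul] at h
      rw [left_eq_add] at h
      exact h
    have hlie : ∀ Cm : gl2 F, ⁅Cm, (1 : gl2 F)⁆ = 0 := by
      intro Cm; simp [Ring.lie_def]
    refine ⟨fun τ => ((-1 : F) ^ (r + 1)) • f (Fin.snoc τ 1), ⟨?_, ?_⟩, ?_⟩
    · -- multilinearity of h
      intro τ i x y c
      simp only [Fin.snoc_update]
      rw [hMA.1 (Fin.snoc τ 1) i.castSucc x y c]
      module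
    · -- alternating property of h
      intro τ i j hij hsame
      show ((-1 : F) ^ (r + 1)) • f (Fin.snoc τ 1) = 0
      have h := hMA.2 (Fin.snoc τ 1) i.castSucc j.castSucc
        (fun hc => hij (Fin.castSucc_injective _ hc))
        (by rw [Fin.snoc_castSucc, Fin.snoc_castSucc]; exact hsame)
      rw [h, smul_zero]
    · -- f = cdiff h
      funext σ
      have hsplit1 :
          (∑ i : Fin (r + 1 + 1), ((-1 : ℤ) ^ (i : ℕ)) •
              rho (Fin.snoc (α := fun _ => gl2 F) σ 1 i) (f (Fin.removeNth (α := fun _ => gl2 F) i (Fin.snoc (α := fun _ => gl2 F) σ 1)))) =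
            (∑ i : Fin (r + 1), ((-1 : ℤ) ^ (i : ℕ)) •
              rho (σ i) (f (Fin.snoc (Fin.removeNth (α := fun _ => gl2 F) i σ) 1))) +
              ((-1 : ℤ) ^ (r + 1)) • (-(f σ)) := by
        rw [Fin.sum_univ_castSucc]
        congr 1
        · refine Finset.sum_congr rfl fun i _ => ?_
          rw [Fin.snoc_castSucc, removeNth_snoc, Fin.coe_castSucc]
        · rw [Fin.removeNth_last, Fin.init_snoc, Fin.snoc_last, Fin.val_last, rho_one]
      have hsplit2 :
          (∑ i : Fin (r + 1 + 1), ∑ j : Fin (r + 1 + 1),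
            if h : (i : ℕ) < (j : ℕ) then
              ((-1 : ℤ) ^ ((i : ℕ) + (j : ℕ))) •
                f (Function.update (Fin.removeNth (α := fun _ => gl2 F) j (Fin.snoc (α := fun _ => gl2 F) σ 1))
                    ⟨(i : ℕ), lt_of_lt_of_le h (Nat.lt_succ_iff.mp j.isLt)⟩
                    ⁅Fin.snoc (α := fun _ => gl2 F) σ 1 i, Fin.snoc (α := fun _ => gl2 F) σ 1 j⁆)
            else 0) =
          ∑ i : Fin (r + 1), ∑ j : Fin (r + 1),
            if h : (i : ℕ) < (j : ℕ) then
              ((-1 : ℤ) ^ ((i : ℕ) + (j : ℕ))) •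
                f (Fin.snoc (Function.update (Fin.removeNth (α := fun _ => gl2 F) j σ)
                    ⟨(i : ℕ), lt_of_lt_of_le h (Nat.lt_succ_iff.mp j.isLt)⟩ ⁅σ i, σ j⁆) 1)
            else 0 := by
        conv_lhs => rw [Fin.sum_univ_castSucc]
        refine Eq.trans (congrArg₂ (· + ·) ?_ ?_) (add_zero _)
        · refine Finset.sum_congr rfl fun i _ => ?_
          conv_lhs => rw [Fin.sum_univ_castSucc]
          refine Eq.trans (congrArg₂ (· + ·) ?_ ?_) (add_zero _)
          · refine Finset.sum_congr rfl fun j _ => ?_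
            by_cases hij : (i : ℕ) < (j : ℕ)
            · rw [dif_pos (by simpa using hij), dif_pos hij]
              have hjr : (j : ℕ) ≤ r := Nat.lt_succ_iff.mp j.isLt
              simp only [Fin.snoc_castSucc, Fin.coe_castSucc]
              rw [removeNth_snoc, update_snoc_mk _ _ _ _ (lt_of_lt_of_le hij hjr)]
            · rw [dif_neg (by simpa using hij), dif_neg hij]
          · rw [dif_pos (by simp only [Fin.coe_castSucc, Fin.val_last]; exact i.isLt)]
            rw [Fin.snoc_castSucc, Fin.snoc_last, hlie, Fin.removeNth_last, Fin.init_snoc,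
              hzero, smul_zero]
        · apply Finset.sum_eq_zero
          intro j _
          rw [dif_neg]
          simp only [Fin.val_last]
          exact Nat.not_lt.mpr (Nat.lt_succ_iff.mp j.isLt)
      have hstep : cdiff (fun τ => f (Fin.snoc τ 1)) σ = ((-1 : ℤ) ^ (r + 1)) • f σ := by
        have hc := congrFun hcoc (Fin.snoc σ 1)
        rw [Pi.zero_apply] at hc
        simp only [cdiff] at hc ⊢
        rw [hsplit1, hsplit2] at hc
        have h6 := eq_neg_of_add_eq_zero_left ((add_right_comm _ _ _).symm.trans hc)
        rw [smul_neg, neg_neg] at h6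
        exact h6
      rw [show cdiff (fun τ => ((-1 : F) ^ (r + 1)) • f (Fin.snoc τ 1)) σ =
            ((-1 : F) ^ (r + 1)) • cdiff (fun τ => f (Fin.snoc τ 1)) σ from
          cdiff_smul _ _ _]
      rw [hstep, zconv, smul_smul, ← pow_add]
      rw [Even.neg_one_pow ⟨r + 1, rfl⟩, one_smul]

end Melikian
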